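/- In the setting where Y | X ∼ Cat(Q(X)) with Q measurable into Δ^{K−1}, Z = f(X), and C = E[Y | Z] is the calibration map, the epistemic loss decomposes into calibration and grouping losses: for any proper loss ℓ with divergence d, assuming all expectations exist, E[d(Q,Z)] = E[d(C,Z)] + E[d(Q,C)], and both terms on the right-hand side are nonnegative. -/

import Mathlib

open MeasureTheory

/-- The one-hot vector `e_k ∈ ℝ^K`. -/
noncomputable def oneHot (K : ℕ) (k : Fin K) : Fin K → ℝ := Pi.single k 1

/-- Extension of a loss `ℓ : e^K × Δ^{K-1} → ℝ` to first arguments in the simplex,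
`ℓ(q, z) = ∑ k, q k * ℓ(e_k, z)`. -/
noncomputable def extLoss {K : ℕ} (ℓ : (Fin K → ℝ) → (Fin K → ℝ) → ℝ)
    (q z : Fin K → ℝ) : ℝ :=
  ∑ k, q k * ℓ (oneHot K k) z

/-- The divergence `d(q, z) = ℓ(q, z) - ℓ(q, q)` of a loss `ℓ`. -/
noncomputable def lossDiv {K : ℕ} (ℓ : (Fin K → ℝ) → (Fin K → ℝ) → ℝ)
    (q z : Fin K → ℝ) : ℝ :=
  extLoss ℓ q z - extLoss ℓ q q

/-!
Since `Z = f(X)`, the tower property gives `E[Q(X) | Z] = E[Y | Z] = C`. For a `σ(Z)`-measurable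
`G`, the loss `ℓ(·, G) = ∑ₖ (·)ₖ ℓ(eₖ, G)` is linear in its first argument with `σ(Z)`-measurable
coefficients, so `E[ℓ(Q, G)] = E[ℓ(C, G)]`. Taking `G = Z` and `G = C` rewrites
`E[d(Q, Z)] = E[ℓ(Q, Z)] - E[ℓ(Q, Q)]` as `E[ℓ(C, Z)] - E[ℓ(C, C)] + E[ℓ(Q, C)] - E[ℓ(Q, Q)]`.
Both terms are nonnegative pointwise by properness, `C` being a.e. in the simplex.
Properness also supplies the integrability of the summands `Qₖ ℓ(eₖ, G)`: on the simplex,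
`ℓ(eₖ, ·)` is bounded below by `ℓ(eₖ, eₖ)`.
-/

def IsProperLoss {K : ℕ} (ℓ : (Fin K → ℝ) → (Fin K → ℝ) → ℝ) : Prop :=
  ∀ q ∈ stdSimplex ℝ (Fin K), ∀ z ∈ stdSimplex ℝ (Fin K), extLoss ℓ q q ≤ extLoss ℓ q z

section Loss

variable {K : ℕ} {ℓ : (Fin K → ℝ) → (Fin K → ℝ) → ℝ}

lemma oneHot_mem_stdSimplex (k : Fin K) : oneHot K k ∈ stdSimplex ℝ (Fin K) :=
  single_mem_stdSimplex ℝ k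

lemma extLoss_oneHot (k : Fin K) (z : Fin K → ℝ) :
    extLoss ℓ (oneHot K k) z = ℓ (oneHot K k) z := by
  simp [extLoss, oneHot, Pi.single_apply, ite_mul]

lemma IsProperLoss.loss_oneHot_le (hℓ : IsProperLoss ℓ) (k : Fin K) {z : Fin K → ℝ}
    (hz : z ∈ stdSimplex ℝ (Fin K)) : ℓ (oneHot K k) (oneHot K k) ≤ ℓ (oneHot K k) z := by
  simpa only [extLoss_oneHot] using hℓ _ (oneHot_mem_stdSimplex k) z hz

lemma IsProperLoss.lossDiv_nonneg (hℓ : IsProperLoss ℓ) {q z : Fin K → ℝ}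
    (hq : q ∈ stdSimplex ℝ (Fin K)) (hz : z ∈ stdSimplex ℝ (Fin K)) : 0 ≤ lossDiv ℓ q z :=
  sub_nonneg.2 (hℓ q hq z hz)

end Loss

section Integration

variable {Ω : Type*} {m m0 : MeasurableSpace Ω} {μ : Measure Ω}

lemma integrable_apply_of_mem_stdSimplex [IsFiniteMeasure μ] {ι : Type*} [Fintype ι]
    {Y : Ω → ι → ℝ} (hY : Measurable Y) (hYΔ : ∀ ω, Y ω ∈ stdSimplex ℝ ι) (k : ι) :
    Integrable (fun ω => Y ω k) μ := by
  refine .of_bound ((measurable_pi_apply k).comp hY).aestronglyMeasurable 1 (ae_of_all _ ?_)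
  intro ω
  obtain ⟨h0, h1⟩ := mem_Icc_of_mem_stdSimplex (hYΔ ω) k
  rw [Real.norm_eq_abs, abs_of_nonneg h0]
  exact h1

lemma ae_condExp_mem_stdSimplex [IsFiniteMeasure μ] (hm : m ≤ m0) {ι : Type*} [Fintype ι]
    {Y : Ω → ι → ℝ} (hY : ∀ k, Integrable (fun ω => Y ω k) μ)
    (hYΔ : ∀ ω, Y ω ∈ stdSimplex ℝ ι) :
    ∀ᵐ ω ∂μ, (fun k => μ[fun ω => Y ω k | m] ω) ∈ stdSimplex ℝ ι := by
  have hnonneg : ∀ᵐ ω ∂μ, ∀ k, 0 ≤ μ[fun ω => Y ω k | m] ω :=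
    ae_all_iff.2 fun k => condExp_nonneg (ae_of_all _ fun ω => (hYΔ ω).1 k)
  have hsum_fun : (∑ k, fun ω => Y ω k) = fun _ => (1 : ℝ) := by
    ext ω
    rw [Finset.sum_apply]
    exact (hYΔ ω).2
  have hsum := condExp_finsetSum (s := Finset.univ) (fun k _ => hY k) m
  rw [hsum_fun, condExp_const hm] at hsum
  filter_upwards [hnonneg, hsum] with ω h0 h1
  refine ⟨h0, ?_⟩
  simpa only [Finset.sum_apply] using h1.symm

lemma integrable_mul_of_integrable_sum_mul {ι : Type*} [Fintype ι] {w h : ι → Ω → ℝ}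
    {c : ι → ℝ} (hw : ∀ k, Integrable (w k) μ) (hw0 : ∀ k, 0 ≤ᵐ[μ] w k)
    (hh : ∀ k, AEStronglyMeasurable (h k) μ) (hc : ∀ k, ∀ᵐ ω ∂μ, c k ≤ h k ω)
    (hsum : Integrable (fun ω => ∑ k, w k ω * h k ω) μ) (k : ι) :
    Integrable (fun ω => w k ω * h k ω) μ := by
  have hwc : ∀ j, Integrable (fun ω => w j ω * c j) μ := fun j => (hw j).mul_const (c j)
  have hshift : Integrable (fun ω => ∑ j, w j ω * (h j ω - c j)) μ := by
    simp only [mul_sub, Finset.sum_sub_distrib]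
    exact hsum.sub (integrable_finsetSum _ fun j _ => hwc j)
  have hterm_nonneg : ∀ᵐ ω ∂μ, ∀ j, 0 ≤ w j ω * (h j ω - c j) := by
    filter_upwards [ae_all_iff.2 hw0, ae_all_iff.2 hc] with ω hw0ω hcω j
    exact mul_nonneg (hw0ω j) (sub_nonneg.2 (hcω j))
  have hk : Integrable (fun ω => w k ω * (h k ω - c k)) μ := by
    refine hshift.mono' ((hw k).1.mul ((hh k).sub aestronglyMeasurable_const)) ?_
    filter_upwards [hterm_nonneg] with ω hω
    rw [Real.norm_eq_abs, abs_of_nonneg (hω k)]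
    exact Finset.single_le_sum (fun j _ => hω j) (Finset.mem_univ k)
  refine (hk.add (hwc k)).congr (ae_of_all _ fun ω => ?_)
  simp only [Pi.add_apply]
  ring

lemma integrable_mul_condExp {f h : Ω → ℝ} (hh : StronglyMeasurable[m] h)
    (hhf : Integrable (h * f) μ) (hf : Integrable f μ) : Integrable (h * μ[f | m]) μ :=
  integrable_condExp.congr (condExp_mul_of_stronglyMeasurable_left hh hhf hf)

lemma integral_mul_condExp [IsFiniteMeasure μ] (hm : m ≤ m0) {f h : Ω → ℝ}
    (hh : StronglyMeasurable[m] h) (hhf : Integrable (h * f) μ) (hf : Integrable f μ) :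
    ∫ ω, (h * μ[f | m]) ω ∂μ = ∫ ω, (h * f) ω ∂μ :=
  (integral_congr_ae (condExp_mul_of_stronglyMeasurable_left hh hhf hf)).symm.trans
    (integral_condExp hm)

lemma integral_extLoss_eq_of_condExp [IsFiniteMeasure μ] (hm : m ≤ m0) {K : ℕ}
    {ℓ : (Fin K → ℝ) → (Fin K → ℝ) → ℝ} (hℓ : IsProperLoss ℓ)
    (hℓmeas : ∀ k, Measurable (ℓ (oneHot K k))) {W C g : Ω → Fin K → ℝ}
    (hW : ∀ k, Integrable (fun ω => W ω k) μ) (hW0 : ∀ k, 0 ≤ᵐ[μ] fun ω => W ω k)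
    (hC : ∀ k, μ[fun ω => W ω k | m] =ᵐ[μ] fun ω => C ω k)
    (hg : Measurable[m] g) (hgΔ : ∀ᵐ ω ∂μ, g ω ∈ stdSimplex ℝ (Fin K))
    (hWg : Integrable (fun ω => extLoss ℓ (W ω) (g ω)) μ) :
    ∫ ω, extLoss ℓ (C ω) (g ω) ∂μ = ∫ ω, extLoss ℓ (W ω) (g ω) ∂μ := by
  set h : Fin K → Ω → ℝ := fun k ω => ℓ (oneHot K k) (g ω)
  have hh : ∀ k, StronglyMeasurable[m] (h k) :=
    fun k => ((hℓmeas k).comp hg).stronglyMeasurable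
  have hWh : ∀ k, Integrable (h k * fun ω => W ω k) μ := fun k => by
    simp only [mul_comm (h k)]
    exact integrable_mul_of_integrable_sum_mul hW hW0
      (fun j => ((hh j).mono hm).aestronglyMeasurable)
      (fun j => hgΔ.mono fun ω hω => hℓ.loss_oneHot_le j hω) hWg k
  have hCh_eq : ∀ k, (h k * μ[fun ω => W ω k | m]) =ᵐ[μ] fun ω => C ω k * h k ω :=
    fun k => (hC k).mono fun ω hω => by simp only [Pi.mul_apply, hω, mul_comm]
  have hCh : ∀ k, Integrable (fun ω => C ω k * h k ω) μ :=
    fun k => (integrable_mul_condExp (hh k) (hWh k) (hW k)).congr (hCh_eq k)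
  simp only [extLoss]
  rw [integral_finsetSum _ fun k _ => hCh k,
    integral_finsetSum _ fun k _ => (hWh k).congr (ae_of_all _ fun ω => mul_comm _ _)]
  refine Finset.sum_congr rfl fun k _ => ?_
  rw [← integral_congr_ae (hCh_eq k), integral_mul_condExp hm (hh k) (hWh k) (hW k)]
  exact integral_congr_ae (ae_of_all _ fun ω => mul_comm _ _)

variable {K : ℕ} {ℓ : (Fin K → ℝ) → (Fin K → ℝ) → ℝ}

lemma integral_lossDiv {q z : Ω → Fin K → ℝ}
    (hqz : Integrable (fun ω => extLoss ℓ (q ω) (z ω)) μ)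
    (hqq : Integrable (fun ω => extLoss ℓ (q ω) (q ω)) μ) :
    ∫ ω, lossDiv ℓ (q ω) (z ω) ∂μ
      = ∫ ω, extLoss ℓ (q ω) (z ω) ∂μ - ∫ ω, extLoss ℓ (q ω) (q ω) ∂μ :=
  integral_sub hqz hqq

lemma IsProperLoss.integral_lossDiv_nonneg (hℓ : IsProperLoss ℓ) {q z : Ω → Fin K → ℝ}
    (hq : ∀ᵐ ω ∂μ, q ω ∈ stdSimplex ℝ (Fin K)) (hz : ∀ᵐ ω ∂μ, z ω ∈ stdSimplex ℝ (Fin K)) :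
    0 ≤ ∫ ω, lossDiv ℓ (q ω) (z ω) ∂μ :=
  integral_nonneg_of_ae (hq.mp (hz.mono fun _ hzω hqω => hℓ.lossDiv_nonneg hqω hzω))

end Integration

/-- calibration/grouping decomposition of the epistemic loss: if
`Y | X ∼ Cat(Q(X))`, `Z = f(X)` and `C = E[Y | Z]`, then for any proper loss
`E[d(Q,Z)] = E[d(C,Z)] + E[d(Q,C)]`, and both right-hand terms are nonnegative. -/
theorem stmt2
    {Ω 𝒳 : Type*} [MeasurableSpace Ω] [MeasurableSpace 𝒳]
    (μ : Measure Ω) [IsProbabilityMeasure μ]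
    (K : ℕ)
    (X : Ω → 𝒳) (hX : Measurable X)
    -- `Y` is a one-hot valued label
    (Y : Ω → Fin K → ℝ) (hY : Measurable Y)
    (hYoh : ∀ ω, ∃ k, Y ω = oneHot K k)
    -- instance-wise class probability `Q`, measurable into the simplex
    (Q : 𝒳 → Fin K → ℝ) (hQ : Measurable Q)
    (hQΔ : ∀ x, Q x ∈ stdSimplex ℝ (Fin K))
    -- conditional label distribution: `Y | X ∼ Cat(Q(X))`
    (hcond : ∀ k, μ[fun ω => Y ω k | MeasurableSpace.comap X inferInstance]
      =ᵐ[μ] fun ω => Q (X ω) k)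
    -- `f` is a measurable map into the probability simplex and `Z = f(X)`
    (f : 𝒳 → Fin K → ℝ) (hf : Measurable f)
    (hfΔ : ∀ x, f x ∈ stdSimplex ℝ (Fin K))
    (Z : Ω → Fin K → ℝ) (hZ : Z = fun ω => f (X ω))
    -- the σ-algebra generated by `Z` and the calibration map `C = E[Y | Z]`
    (mZ : MeasurableSpace Ω) (hmZ : mZ = MeasurableSpace.comap Z inferInstance)
    (C : Ω → Fin K → ℝ) (hC : ∀ k, (fun ω => C ω k) = μ[fun ω => Y ω k | mZ])
    -- `ℓ` is a proper loss
    (ℓ : (Fin K → ℝ) → (Fin K → ℝ) → ℝ)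
    (hℓmeas : ∀ k, Measurable (ℓ (oneHot K k)))
    (hproper : ∀ q ∈ stdSimplex ℝ (Fin K), ∀ z ∈ stdSimplex ℝ (Fin K),
      extLoss ℓ q q ≤ extLoss ℓ q z)
    -- all expectations exist
    (hint1 : Integrable (fun ω => extLoss ℓ (Q (X ω)) (Z ω)) μ)
    (hint2 : Integrable (fun ω => extLoss ℓ (Q (X ω)) (Q (X ω))) μ)
    (hint3 : Integrable (fun ω => extLoss ℓ (C ω) (Z ω)) μ)
    (hint4 : Integrable (fun ω => extLoss ℓ (Q (X ω)) (C ω)) μ)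
    (hint5 : Integrable (fun ω => extLoss ℓ (C ω) (C ω)) μ) :
    (∫ ω, lossDiv ℓ (Q (X ω)) (Z ω) ∂μ
        = ∫ ω, lossDiv ℓ (C ω) (Z ω) ∂μ + ∫ ω, lossDiv ℓ (Q (X ω)) (C ω) ∂μ)
      ∧ 0 ≤ ∫ ω, lossDiv ℓ (C ω) (Z ω) ∂μ
      ∧ 0 ≤ ∫ ω, lossDiv ℓ (Q (X ω)) (C ω) ∂μ := by
  have hℓ : IsProperLoss ℓ := hproper
  have hmX := hX.comap_le
  have hmZX : mZ ≤ MeasurableSpace.comap X inferInstance := by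
    rw [hmZ, hZ, ← Function.comp_def, ← MeasurableSpace.comap_comp]
    exact MeasurableSpace.comap_mono hf.comap_le
  have hmZle := hmZX.trans hmX
  have hZm : Measurable[mZ] Z := hmZ ▸ comap_measurable Z
  have hCm : Measurable[mZ] C :=
    measurable_pi_iff.2 fun k => hC k ▸ stronglyMeasurable_condExp.measurable
  have hZΔ : ∀ᵐ ω ∂μ, Z ω ∈ stdSimplex ℝ (Fin K) := ae_of_all _ fun ω => hZ ▸ hfΔ (X ω)
  have hYΔ : ∀ ω, Y ω ∈ stdSimplex ℝ (Fin K) :=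
    fun ω => (hYoh ω).elim fun k hk => hk ▸ oneHot_mem_stdSimplex k
  have hCΔ : ∀ᵐ ω ∂μ, C ω ∈ stdSimplex ℝ (Fin K) := by
    simpa only [← hC] using
      ae_condExp_mem_stdSimplex (μ := μ) hmZle (integrable_apply_of_mem_stdSimplex hY hYΔ) hYΔ
  have hQC : ∀ k, μ[fun ω => Q (X ω) k | mZ] =ᵐ[μ] fun ω => C ω k := fun k => by
    rw [hC k]
    exact (condExp_congr_ae (hcond k)).symm.trans (condExp_condExp_of_le hmZX hmX)
  have hQint := integrable_apply_of_mem_stdSimplex (μ := μ) (Y := fun ω => Q (X ω))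
    (hQ.comp hX) fun ω => hQΔ (X ω)
  have hQ0 : ∀ k, 0 ≤ᵐ[μ] fun ω => Q (X ω) k := fun k => ae_of_all _ fun ω => (hQΔ _).1 k
  have hZeq := integral_extLoss_eq_of_condExp hmZle hℓ hℓmeas hQint hQ0 hQC hZm hZΔ hint1
  have hCeq := integral_extLoss_eq_of_condExp hmZle hℓ hℓmeas hQint hQ0 hQC hCm hCΔ hint4
  refine ⟨?_, hℓ.integral_lossDiv_nonneg hCΔ hZΔ,
    hℓ.integral_lossDiv_nonneg (ae_of_all _ fun ω => hQΔ (X ω)) hCΔ⟩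
  rw [integral_lossDiv hint1 hint2, integral_lossDiv hint3 hint5, integral_lossDiv hint4 hint2]
  linarith
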